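/- Let G = (U ∪ W, E) be a bipartite graph in which every vertex of W has degree at most 2. Then for every S ⊆ E, the F_2-rank of the bipartite adjacency matrix of (U ∪ W, S) equals |U| − κ'(S), where κ'(S) is the number of connected components C of (U ∪ W, S) such that every W-vertex of C has degree exactly 2 in C and C contains at least one vertex of U. -/

import Mathlib

/-- The bipartite adjacency matrix over `F_2` of the edge set `S ⊆ U × W`. -/
def bipMat {U W : Type*} [DecidableEq U] [DecidableEq W] (S : Finset (U × W)) :
    Matrix U W (ZMod 2) :=
  Matrix.of fun u w => if (u, w) ∈ S then 1 else 0

/-- The simple graph on `U ⊕ W` determined by the bipartite edge set `E ⊆ U × W`. -/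
def bipGraph {U W : Type*} (E : Finset (U × W)) : SimpleGraph (U ⊕ W) :=
  SimpleGraph.fromRel fun x y => ∃ p ∈ E, x = Sum.inl p.1 ∧ y = Sum.inr p.2

/-- The number of pure connected components of `(U ∪ W, S)`: components containing a vertex
of `U` in which every `W`-vertex has degree exactly `2`. -/
noncomputable def pureComponents {U W : Type*} [Fintype U] [Fintype W]
    [DecidableEq U] [DecidableEq W] (S : Finset (U × W)) : ℕ :=
  Nat.card {c : (bipGraph S).ConnectedComponent //
    (∃ u : U, (bipGraph S).connectedComponentMk (Sum.inl u) = c) ∧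
    ∀ w : W, (bipGraph S).connectedComponentMk (Sum.inr w) = c →
      (S.filter fun p => p.2 = w).card = 2}

/-!
Over `F₂` the rank of `M = bipMat S` is `|U|` minus the dimension of its left kernel. A vector
`x : U → F₂` lies in that kernel iff, for every `w`, the values of `x` on the at most two
neighbours of `w` sum to zero, i.e. they agree, and vanish when `w` has exactly one neighbour.
Such an `x` is therefore constant on connected components and zero on every component that is not
pure; conversely every such `x` lies in the kernel. So the left kernel is the space of functions
on the pure components.
-/

theorem ZMod.sum_eq_zero_iff_of_card_le_two {ι : Type*} {s : Finset ι} (hs : s.card ≤ 2)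
    (f : ι → ZMod 2) :
    ∑ i ∈ s, f i = 0 ↔
      ∀ i ∈ s, ∀ j ∈ s, f i = f j ∧ (s.card ≠ 2 → f i = 0) := by
  classical
  obtain h | h | h : s.card = 0 ∨ s.card = 1 ∨ s.card = 2 := by omega
  · simp [Finset.card_eq_zero.mp h]
  · obtain ⟨a, rfl⟩ := Finset.card_eq_one.mp h
    simp
  · obtain ⟨a, b, hab, rfl⟩ := Finset.card_eq_two.mp h
    simp only [Finset.sum_pair hab, h, ne_eq, not_true_eq_false, false_imp_iff, and_true,
      Finset.mem_insert, Finset.mem_singleton, forall_eq_or_imp, forall_eq, true_and,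
      add_eq_zero_iff_eq_neg, ZMod.neg_eq_self_mod_two]
    exact ⟨fun h => ⟨h, h.symm⟩, And.left⟩

section BipartiteKernel

open Matrix

variable {U W : Type*} {S : Finset (U × W)}

@[simp]
lemma bipGraph_adj_inl_inr {u : U} {w : W} :
    (bipGraph S).Adj (Sum.inl u) (Sum.inr w) ↔ (u, w) ∈ S := by
  simp [bipGraph]

@[simp]
lemma bipGraph_adj_inr_inl {u : U} {w : W} :
    (bipGraph S).Adj (Sum.inr w) (Sum.inl u) ↔ (u, w) ∈ S := by
  simp [bipGraph]

@[simp]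
lemma bipGraph_not_adj_inl_inl {u u' : U} : ¬(bipGraph S).Adj (Sum.inl u) (Sum.inl u') := by
  simp [bipGraph]

@[simp]
lemma bipGraph_not_adj_inr_inr {w w' : W} : ¬(bipGraph S).Adj (Sum.inr w) (Sum.inr w') := by
  simp [bipGraph]

lemma connectedComponentMk_inl_eq_inr {u : U} {w : W} (h : (u, w) ∈ S) :
    (bipGraph S).connectedComponentMk (Sum.inl u) =
      (bipGraph S).connectedComponentMk (Sum.inr w) :=
  SimpleGraph.ConnectedComponent.sound (bipGraph_adj_inl_inr.mpr h).reachable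

variable [DecidableEq W]

variable (S) in
def IsPureComponent (c : (bipGraph S).ConnectedComponent) : Prop :=
  (∃ u : U, (bipGraph S).connectedComponentMk (Sum.inl u) = c) ∧
    ∀ w : W, (bipGraph S).connectedComponentMk (Sum.inr w) = c →
      (S.filter fun p => p.2 = w).card = 2

variable (S) in
noncomputable def extendPure :
    ({c // IsPureComponent S c} → ZMod 2) →ₗ[ZMod 2] U → ZMod 2 :=
  LinearMap.funLeft (ZMod 2) (ZMod 2) (fun u => (bipGraph S).connectedComponentMk (Sum.inl u))
    ∘ₗ Function.ExtendByZero.linearMap (ZMod 2) Subtype.val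

variable {f : {c // IsPureComponent S c} → ZMod 2} {u : U}

lemma extendPure_apply_of_isPureComponent
    (h : IsPureComponent S ((bipGraph S).connectedComponentMk (Sum.inl u))) :
    extendPure S f u = f ⟨_, h⟩ :=
  Subtype.val_injective.extend_apply f 0 ⟨_, h⟩

lemma extendPure_apply_of_not_isPureComponent
    (h : ¬IsPureComponent S ((bipGraph S).connectedComponentMk (Sum.inl u))) :
    extendPure S f u = 0 :=
  Function.extend_apply' _ _ _ <| by rintro ⟨⟨c, hc⟩, rfl⟩; exact h hc

lemma extendPure_congr {u' : U}
    (h : (bipGraph S).connectedComponentMk (Sum.inl u) =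
      (bipGraph S).connectedComponentMk (Sum.inl u')) : extendPure S f u = extendPure S f u' := by
  simp only [extendPure, LinearMap.comp_apply, LinearMap.funLeft_apply, h]

lemma extendPure_injective : Function.Injective (extendPure S) := by
  refine (injective_iff_map_eq_zero _).mpr fun f hf => funext fun ⟨c, hc⟩ => ?_
  obtain ⟨u, rfl⟩ := hc.1
  rw [← extendPure_apply_of_isPureComponent (f := f) hc, hf, Pi.zero_apply, Pi.zero_apply]

variable [Fintype U] [DecidableEq U]

variable (S) in
def bipNeighbors (w : W) : Finset U :=
  Finset.univ.filter fun u => (u, w) ∈ S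

@[simp]
lemma mem_bipNeighbors {u : U} {w : W} : u ∈ bipNeighbors S w ↔ (u, w) ∈ S := by
  simp [bipNeighbors]

lemma card_bipNeighbors (w : W) :
    (bipNeighbors S w).card = (S.filter fun p => p.2 = w).card := by
  refine Finset.card_nbij' (fun u => (u, w)) Prod.fst ?_ ?_ (fun _ _ => rfl) ?_
  · intro u hu
    simpa using hu
  · rintro ⟨u, w'⟩ hp
    obtain ⟨hp, rfl⟩ := Finset.mem_filter.mp hp
    simpa using hp
  · rintro ⟨u, w'⟩ hp
    obtain ⟨-, rfl⟩ := Finset.mem_filter.mp hp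
    rfl

lemma vecMul_bipMat_apply (x : U → ZMod 2) (w : W) :
    (x ᵥ* bipMat S) w = ∑ u ∈ bipNeighbors S w, x u := by
  simp [Matrix.vecMul, dotProduct, bipMat, bipNeighbors, Finset.sum_filter]

variable (S) in
/-- A `W`-vertex takes the value `t` when all its neighbours do; for a vector in the left kernel
this property propagates along edges. -/
def TakesValue (x : U → ZMod 2) (t : ZMod 2) : U ⊕ W → Prop :=
  Sum.elim (fun u => x u = t) fun w => ∀ u ∈ bipNeighbors S w, x u = t

section KernelVector

variable {x : U → ZMod 2} (hdeg : ∀ w, (bipNeighbors S w).card ≤ 2)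
  (hx : ∀ w, ∑ u ∈ bipNeighbors S w, x u = 0)
include hdeg hx

lemma TakesValue.of_adj {t : ZMod 2} {v v' : U ⊕ W} (hv : TakesValue S x t v)
    (hadj : (bipGraph S).Adj v v') : TakesValue S x t v' := by
  have hconst : ∀ w, ∀ a ∈ bipNeighbors S w, ∀ b ∈ bipNeighbors S w, x a = x b :=
    fun w a ha b hb => ((ZMod.sum_eq_zero_iff_of_card_le_two (hdeg w) x).mp (hx w) a ha b hb).1
  rcases v with u | w <;> rcases v' with u' | w' <;> simp only [bipGraph_adj_inl_inr,
    bipGraph_adj_inr_inl, bipGraph_not_adj_inl_inl, bipGraph_not_adj_inr_inr] at hadj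
  · exact fun a ha => (hconst w' a ha u (mem_bipNeighbors.mpr hadj)).trans hv
  · exact hv u' (mem_bipNeighbors.mpr hadj)

lemma TakesValue.of_reachable {t : ZMod 2} {v v' : U ⊕ W} (hv : TakesValue S x t v)
    (h : (bipGraph S).Reachable v v') : TakesValue S x t v' := by
  obtain ⟨p⟩ := h
  induction p with
  | nil => exact hv
  | cons hadj _ ih => exact ih (hv.of_adj hdeg hx hadj)

lemma eq_of_connectedComponentMk_inl_eq {u u' : U}
    (h : (bipGraph S).connectedComponentMk (Sum.inl u) =
      (bipGraph S).connectedComponentMk (Sum.inl u')) : x u = x u' :=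
  TakesValue.of_reachable (v := Sum.inl u') hdeg hx rfl
    (SimpleGraph.ConnectedComponent.exact h.symm)

lemma eq_zero_of_not_isPureComponent {u : U}
    (h : ¬IsPureComponent S ((bipGraph S).connectedComponentMk (Sum.inl u))) : x u = 0 := by
  obtain ⟨w, hw, hcard⟩ : ∃ w, (bipGraph S).connectedComponentMk (Sum.inr w) =
      (bipGraph S).connectedComponentMk (Sum.inl u) ∧ (bipNeighbors S w).card ≠ 2 := by
    simp only [IsPureComponent, not_and, not_forall, exists_prop] at h
    simpa [card_bipNeighbors] using h ⟨u, rfl⟩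
  have hw0 : TakesValue S x 0 (Sum.inr w) := fun a ha =>
    ((ZMod.sum_eq_zero_iff_of_card_le_two (hdeg w) x).mp (hx w) a ha a ha).2 hcard
  exact hw0.of_reachable hdeg hx (SimpleGraph.ConnectedComponent.exact hw)

end KernelVector

lemma sum_extendPure_eq_zero (hdeg : ∀ w, (bipNeighbors S w).card ≤ 2) (w : W) :
    ∑ u ∈ bipNeighbors S w, extendPure S f u = 0 := by
  refine (ZMod.sum_eq_zero_iff_of_card_le_two (hdeg w) _).mpr
    fun a ha b hb => ⟨?_, fun hw => ?_⟩
  · exact extendPure_congr ((connectedComponentMk_inl_eq_inr (mem_bipNeighbors.mp ha)).trans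
      (connectedComponentMk_inl_eq_inr (mem_bipNeighbors.mp hb)).symm)
  · refine extendPure_apply_of_not_isPureComponent fun hpure => hw ?_
    rw [card_bipNeighbors]
    exact hpure.2 w (connectedComponentMk_inl_eq_inr (mem_bipNeighbors.mp ha)).symm

lemma exists_extendPure_eq {x : U → ZMod 2} (hdeg : ∀ w, (bipNeighbors S w).card ≤ 2)
    (hx : ∀ w, ∑ u ∈ bipNeighbors S w, x u = 0) : ∃ f, extendPure S f = x := by
  refine ⟨fun c => x c.2.1.choose, funext fun u => ?_⟩
  by_cases h : IsPureComponent S ((bipGraph S).connectedComponentMk (Sum.inl u))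
  · rw [extendPure_apply_of_isPureComponent h]
    exact eq_of_connectedComponentMk_inl_eq hdeg hx h.1.choose_spec
  · rw [extendPure_apply_of_not_isPureComponent h, eq_zero_of_not_isPureComponent hdeg hx h]

lemma range_extendPure (hdeg : ∀ w, (bipNeighbors S w).card ≤ 2) :
    LinearMap.range (extendPure S) = LinearMap.ker (bipMat S)ᵀ.mulVecLin := by
  ext x
  have hker :
    x ∈ LinearMap.ker (bipMat S)ᵀ.mulVecLin ↔ ∀ w, ∑ u ∈ bipNeighbors S w, x u = 0 := by
    simp [funext_iff, vecMul_bipMat_apply]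
  rw [LinearMap.mem_range, hker]
  exact ⟨fun ⟨f, hf⟩ => hf ▸ sum_extendPure_eq_zero hdeg, exists_extendPure_eq hdeg⟩

lemma rank_bipMat_add_pureComponents [Fintype W] (hdeg : ∀ w, (bipNeighbors S w).card ≤ 2) :
    (bipMat S).rank + pureComponents S = Fintype.card U := by
  change _ + Nat.card {c // IsPureComponent S c} = _
  have : Fintype {c // IsPureComponent S c} := Fintype.ofFinite _
  rw [← rank_transpose, Matrix.rank, ← Module.finrank_fintype_fun_eq_card (ZMod 2),
    ← LinearMap.finrank_range_add_finrank_ker (bipMat S)ᵀ.mulVecLin, ← range_extendPure hdeg,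
    LinearMap.finrank_range_of_inj extendPure_injective, Module.finrank_fintype_fun_eq_card,
    Nat.card_eq_fintype_card]

end BipartiteKernel

/-- Let `G = (U ∪ W, E)` be a bipartite graph in which every vertex of `W` has degree at
most `2`.  Then for every `S ⊆ E`, the `F_2`-rank of the bipartite adjacency matrix of
`(U ∪ W, S)` equals `|U| − κ'(S)`, where `κ'(S)` is the number of pure connected
components of `(U ∪ W, S)`. -/
theorem rank_bipMat_eq_card_sub_pure {U W : Type*} [Fintype U] [Fintype W]
    [DecidableEq U] [DecidableEq W] (E : Finset (U × W))
    (hdeg : ∀ w : W, (E.filter fun p => p.2 = w).card ≤ 2)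
    (S : Finset (U × W)) (hS : S ⊆ E) :
    (bipMat S).rank = Fintype.card U - pureComponents S := by
  have hdegS : ∀ w, (bipNeighbors S w).card ≤ 2 := fun w => card_bipNeighbors (S := S) w ▸
    (Finset.card_le_card (Finset.filter_subset_filter _ hS)).trans (hdeg w)
  have := rank_bipMat_add_pureComponents hdegS
  omega
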